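/- arXiv:1611.02084 — 4 statements merged into one kernel-verified Lean document; each statement's English description precedes it below -/
import Mathlib

section
/- Let (y_n) be a real sequence with |y_n| ≤ 1 for all n and whose Cesàro averages tend to 0 (i.e., (1/n)∑_{i=1}^n y_i → 0). Then for every ε ∈ (0,1) and every natural number m ≥ 1 there exists L₀ such that for every L ≥ L₀ and every interval I ⊆ [1, mL] of integers with |I| ≥ L, the absolute value of the average of y over I is less than ε. -/
/-!
Write `S k = ∑_{i ≤ k} y i`. Since `S k / k → 0`, for every `δ > 0` there is a constant `C` with
`|S k| ≤ δ k + C` for all `k`. The sum over `[a, b] ⊆ [1, mL]` is `S b - S (a - 1)`, hence at most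
`2 (δ m L + C)` in absolute value; for `δ = ε / (4m)` this is `ε L / 2 + 2C < ε L ≤ ε (b + 1 - a)`
once `L > 4C / ε`.
-/

open Finset Filter Topology

lemma exists_abs_le_mul_add_of_tendsto_div_zero {S : ℕ → ℝ}
    (hS : Tendsto (fun n : ℕ => S n / n) atTop (𝓝 0)) {δ : ℝ} (hδ : 0 < δ) :
    ∃ C : ℝ, ∀ k, |S k| ≤ δ * k + C := by
  obtain ⟨N, hN⟩ := Metric.tendsto_atTop.mp hS δ hδ
  refine ⟨∑ k ∈ range (N + 1), |S k|, fun k => ?_⟩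
  have hC : 0 ≤ ∑ k ∈ range (N + 1), |S k| := sum_nonneg fun _ _ => abs_nonneg _
  rcases le_or_gt k N with hk | hk
  · have hSk := single_le_sum (fun i _ => abs_nonneg (S i)) (mem_range.mpr (Nat.lt_succ_of_le hk))
    have hδk : 0 ≤ δ * k := by positivity
    linarith
  · have hkpos : (0 : ℝ) < k := by exact_mod_cast (N.zero_le.trans_lt hk)
    have h := hN k hk.le
    rw [Real.dist_eq, sub_zero, abs_div, Nat.abs_cast, div_lt_iff₀ hkpos] at h
    linarith

lemma sum_Icc_eq_sub_sum_Icc_one (y : ℕ → ℝ) {a b : ℕ} (ha : 1 ≤ a) (hab : a ≤ b + 1) :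
    ∑ i ∈ Icc a b, y i = ∑ i ∈ Icc 1 b, y i - ∑ i ∈ Icc 1 (a - 1), y i := by
  obtain ⟨a, rfl⟩ := Nat.exists_eq_add_of_le' ha
  have hIcc_one (n : ℕ) : Icc 1 n = Ioc 0 n := Icc_add_one_left_eq_Ioc 0 n
  rw [Nat.add_sub_cancel, Icc_add_one_left_eq_Ioc, hIcc_one, hIcc_one,
    ← sum_Ioc_consecutive y a.zero_le (by omega : a ≤ b)]
  ring

lemma abs_sum_Icc_le_of_abs_partialSum_le (y : ℕ → ℝ) {δ C : ℝ} (hδ : 0 ≤ δ)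
    (hC : ∀ k, |∑ i ∈ Icc 1 k, y i| ≤ δ * k + C) {a b M : ℕ} (ha : 1 ≤ a) (hab : a ≤ b + 1)
    (hbM : b ≤ M) : |∑ i ∈ Icc a b, y i| ≤ 2 * (δ * M + C) := by
  have hb : δ * b ≤ δ * M := by gcongr
  have ha' : δ * (a - 1 : ℕ) ≤ δ * M := by gcongr; omega
  rw [sum_Icc_eq_sub_sum_Icc_one y ha hab]
  linarith [abs_sub (∑ i ∈ Icc 1 b, y i) (∑ i ∈ Icc 1 (a - 1), y i), hC b, hC (a - 1)]

theorem stmt0_general (y : ℕ → ℝ)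
    (hzero : Filter.Tendsto (fun n : ℕ => (∑ i ∈ Finset.Icc 1 n, y i) / n)
      Filter.atTop (nhds 0)) :
    ∀ ε : ℝ, 0 < ε → ε < 1 → ∀ m : ℕ, 1 ≤ m →
      ∃ L₀ : ℕ, ∀ L : ℕ, L₀ ≤ L → ∀ a b : ℕ, 1 ≤ a → a ≤ b → b ≤ m * L →
        L ≤ b + 1 - a →
        |(∑ i ∈ Finset.Icc a b, y i) / (b + 1 - a : ℕ)| < ε := by
  intro ε hε _ m hm
  have hδ : 0 < ε / (4 * m) := by positivity
  obtain ⟨C, hC⟩ := exists_abs_le_mul_add_of_tendsto_div_zero hzero hδ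
  refine ⟨⌈4 * C / ε⌉₊ + 1, fun L hL a b ha hab hbm hlen => ?_⟩
  have hCL : 4 * C < ε * L := by
    have hL' := Nat.lt_of_ceil_lt (Nat.lt_of_succ_le hL)
    rw [div_lt_iff₀ hε] at hL'
    linarith
  have hwindow := abs_sum_Icc_le_of_abs_partialSum_le y hδ.le hC ha (by omega) hbm
  have hδmL : ε / (4 * m) * (m * L : ℕ) = ε * L / 4 := by
    push_cast; field_simp
  have hlenL : (L : ℝ) ≤ (b + 1 - a : ℕ) := by exact_mod_cast hlen
  have hlen0 : (0 : ℝ) < (b + 1 - a : ℕ) := by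
    have : (0 : ℝ) < L := by exact_mod_cast (Nat.succ_pos _).trans_le hL
    linarith
  rw [abs_div, Nat.abs_cast, div_lt_iff₀ hlen0]
  calc |∑ i ∈ Icc a b, y i| ≤ ε * L / 2 + 2 * C := by linarith
    _ < ε * L := by linarith
    _ ≤ ε * (b + 1 - a : ℕ) := by gcongr

theorem stmt0 (y : ℕ → ℝ) (hbd : ∀ n, |y n| ≤ 1)
    (hzero : Filter.Tendsto (fun n : ℕ => (∑ i ∈ Finset.Icc 1 n, y i) / n)
      Filter.atTop (nhds 0)) :
    ∀ ε : ℝ, 0 < ε → ε < 1 → ∀ m : ℕ, 1 ≤ m →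
      ∃ L₀ : ℕ, ∀ L : ℕ, L₀ ≤ L → ∀ a b : ℕ, 1 ≤ a → a ≤ b → b ≤ m * L →
        L ≤ b + 1 - a →
        |(∑ i ∈ Finset.Icc a b, y i) / (b + 1 - a : ℕ)| < ε :=
  stmt0_general y hzero
end

section
/- Let X₁, …, X_m be independent real random variables each taking values in [−1,1], each with variance at most v > 0. Let X̄ = (1/m)∑ X_i. Then for every ε ∈ (0,2), P(|X̄ − E X̄| ≥ ε) < 2 · 4^m · v^{εm/2}. -/
open MeasureTheory ProbabilityTheory Real
open scoped Nat

/-!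
For `t ≥ 0` and `|y| ≤ b`, comparing the exponential series term by term gives
`b² (e^{ty} - 1 - ty) ≤ y² (e^{tb} - 1 - tb)`. Hence a centred variable with `|Y| ≤ 2` and
variance at most `v` has `E e^{tY} ≤ exp (v (e^{2t} - 1 - 2t) / 4)`, and Chernoff's bound for a sum
of `m` independent such variables at `e^{2t} = 1 + 2ε/v` is Hoeffding's refined bound `W^{-m}`.
The elementary estimate `W ≥ v^{-ε/2} / 4` comes from dropping `v log (1 + 2ε/v) ≥ 0`, from
`log (v + 2ε) > log (2ε)` and from `x (1 - log x) ≤ 1` at `x = 2ε`. Both tails of `X̄ - E X̄`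
are of this form, the lower one for the variables `-Xᵢ`.
-/

lemma Real.hasSum_pow_div_factorial_add_two (x : ℝ) :
    HasSum (fun n : ℕ => x ^ (n + 2) / (n + 2)!) (exp x - 1 - x) := by
  have hexp : HasSum (fun n : ℕ => x ^ n / n !) (exp x) := by
    rw [Real.exp_eq_exp_ℝ]; exact NormedSpace.expSeries_div_hasSum_exp x
  have h := (hasSum_nat_add_iff' 2).mpr hexp
  simpa [Finset.sum_range_succ, sub_sub] using h

lemma Real.sq_mul_exp_sub_le {t y b : ℝ} (ht : 0 ≤ t) (hy : |y| ≤ b) :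
    b ^ 2 * (exp (t * y) - 1 - t * y) ≤ y ^ 2 * (exp (t * b) - 1 - t * b) := by
  refine hasSum_le (fun n => ?_) ((hasSum_pow_div_factorial_add_two _).mul_left _)
    ((hasSum_pow_div_factorial_add_two _).mul_left _)
  have hyn : y ^ n ≤ b ^ n := (le_abs_self _).trans <|
    (abs_pow y n).trans_le (pow_le_pow_left₀ (abs_nonneg y) hy n)
  have hterm : b ^ 2 * (t * y) ^ (n + 2) ≤ y ^ 2 * (t * b) ^ (n + 2) :=
    calc b ^ 2 * (t * y) ^ (n + 2) = t ^ (n + 2) * y ^ 2 * b ^ 2 * y ^ n := by ring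
      _ ≤ t ^ (n + 2) * y ^ 2 * b ^ 2 * b ^ n := by gcongr
      _ = y ^ 2 * (t * b) ^ (n + 2) := by ring
  simp only [mul_div_assoc']
  gcongr

lemma Real.bennett_exponent_lt {v ε t : ℝ} (hv : 0 < v) (hε : 0 < ε)
    (ht : exp (t * 2) = 1 + 2 * ε / v) :
    -t * ε + v * (exp (t * 2) - 1 - t * 2) / 2 ^ 2 < log 4 + ε / 2 * log v := by
  have hlog : t * 2 = log (v + 2 * ε) - log v := by
    rw [← log_div (by positivity) hv.ne', ← log_exp (t * 2), ht, add_div, div_self hv.ne']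
  have ht0 : 0 ≤ t := by
    have : 1 ≤ exp (t * 2) := by rw [ht]; linarith [div_pos (mul_pos two_pos hε) hv]
    linarith [one_le_exp_iff.mp this]
  have hlog_gt : log (2 * ε) < log (v + 2 * ε) := log_lt_log (by positivity) (by linarith)
  have hlog_inv := one_sub_inv_le_log_of_pos (mul_pos two_pos hε)
  have hinv : 2 * ε * (2 * ε)⁻¹ = 1 := mul_inv_cancel₀ (by positivity)
  have hlog4 : 1 / 4 < log 4 := by
    rw [show (4 : ℝ) = 2 ^ 2 by norm_num, log_pow]
    linarith [log_two_gt_d9]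
  rw [ht]
  field_simp
  nlinarith [mul_nonneg hv.le ht0]

namespace ProbabilityTheory

variable {Ω : Type*} [MeasurableSpace Ω] {μ : Measure Ω} [IsProbabilityMeasure μ]

lemma mgf_le_exp_of_abs_le {Y : Ω → ℝ} {b v t : ℝ} (hY : AEMeasurable Y μ) (hb : 0 < b)
    (hYb : ∀ ω, |Y ω| ≤ b) (hmean : μ[Y] = 0) (hvar : variance Y μ ≤ v) (ht : 0 ≤ t) :
    mgf Y μ t ≤ exp (v * (exp (t * b) - 1 - t * b) / b ^ 2) := by
  set c := exp (t * b) - 1 - t * b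
  have hc : 0 ≤ c := by linarith [add_one_le_exp (t * b)]
  have hYint : Integrable Y μ := .of_bound hY.aestronglyMeasurable b (.of_forall hYb)
  have hY2int : Integrable (fun ω => Y ω ^ 2) μ :=
    .of_bound (hY.pow_const 2).aestronglyMeasurable (b ^ 2) <| .of_forall fun ω => by
      simpa [abs_pow] using pow_le_pow_left₀ (abs_nonneg _) (hYb ω) 2
  have hexpint := integrable_exp_mul_of_le t b ht hY (.of_forall fun ω => le_of_abs_le (hYb ω))
  have hsecond : μ[fun ω => Y ω ^ 2] ≤ v := by
    simpa [variance_eq_integral hY, hmean] using hvar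
  have hpoint (ω : Ω) : exp (t * Y ω) ≤ 1 + t * Y ω + Y ω ^ 2 * (c / b ^ 2) := by
    have : exp (t * Y ω) - 1 - t * Y ω ≤ Y ω ^ 2 * c / b ^ 2 := by
      rw [le_div_iff₀ (by positivity), mul_comm]
      exact Real.sq_mul_exp_sub_le ht (hYb ω)
    rw [mul_div_assoc']
    linarith
  have hlin : Integrable (fun ω => 1 + t * Y ω) μ := (integrable_const 1).add (hYint.const_mul t)
  have hmgf : mgf Y μ t ≤ 1 + v * c / b ^ 2 :=
    calc mgf Y μ t ≤ ∫ ω, (1 + t * Y ω + Y ω ^ 2 * (c / b ^ 2)) ∂μ :=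
          integral_mono hexpint (hlin.add (hY2int.mul_const _)) hpoint
      _ = 1 + μ[fun ω => Y ω ^ 2] * (c / b ^ 2) := by
          rw [integral_add hlin (hY2int.mul_const _),
            integral_add (integrable_const 1) (hYint.const_mul t), integral_const_mul,
            integral_mul_const, hmean]
          simp
      _ ≤ 1 + v * c / b ^ 2 := by
          rw [mul_div_assoc]; gcongr
  exact hmgf.trans (by linarith [add_one_le_exp (v * c / b ^ 2)])

lemma measureReal_sum_ge_le_exp {ι : Type*} [Fintype ι] {Y : ι → Ω → ℝ} {b v t : ℝ}
    (hY : ∀ i, Measurable (Y i)) (hind : iIndepFun Y μ) (hb : 0 < b)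
    (hYb : ∀ i ω, |Y i ω| ≤ b) (hmean : ∀ i, μ[Y i] = 0) (hvar : ∀ i, variance (Y i) μ ≤ v)
    (ht : 0 ≤ t) (a : ℝ) :
    μ.real {ω | a ≤ ∑ i, Y i ω}
      ≤ exp (-t * a + Fintype.card ι * (v * (exp (t * b) - 1 - t * b) / b ^ 2)) := by
  have hint := hind.integrable_exp_mul_sum hY
    (s := Finset.univ) fun i _ =>
      integrable_exp_mul_of_le t b ht (hY i).aemeasurable
        (.of_forall fun ω => le_of_abs_le (hYb i ω))
  have hchernoff := measure_ge_le_exp_mul_mgf a ht hint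
  simp only [Finset.sum_apply] at hchernoff
  refine hchernoff.trans ?_
  rw [hind.mgf_sum hY, exp_add, ← Finset.card_univ, exp_nat_mul, ← Finset.prod_const]
  gcongr with i
  · exact fun i _ => mgf_nonneg
  · exact mgf_le_exp_of_abs_le (hY i).aemeasurable hb (hYb i) (hmean i) (hvar i) ht

lemma abs_sub_integral_le_two {X : Ω → ℝ} (hrange : ∀ ω, X ω ∈ Set.Icc (-1 : ℝ) 1) (ω : Ω) :
    |X ω - μ[X]| ≤ 2 := by
  have hmean : |μ[X]| ≤ 1 := by
    simpa using norm_integral_le_of_norm_le_const (μ := μ) (f := X) (C := 1)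
      (.of_forall fun ω => abs_le.mpr (hrange ω))
  have := abs_le.mpr (hrange ω)
  exact (abs_sub _ _).trans (by linarith)

lemma measureReal_sum_sub_integral_ge_lt {ι : Type*} [Fintype ι] [Nonempty ι]
    {X : ι → Ω → ℝ} {v ε : ℝ} (hX : ∀ i, Measurable (X i)) (hind : iIndepFun X μ)
    (hrange : ∀ i ω, X i ω ∈ Set.Icc (-1 : ℝ) 1) (hv : 0 < v) (hvar : ∀ i, variance (X i) μ ≤ v)
    (hε : 0 < ε) :
    μ.real {ω | Fintype.card ι * ε ≤ ∑ i, (X i ω - μ[X i])}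
      < 4 ^ Fintype.card ι * v ^ (ε * Fintype.card ι / 2) := by
  set n := Fintype.card ι
  set t := log (1 + 2 * ε / v) / 2
  have ht : exp (t * 2) = 1 + 2 * ε / v := by
    rw [div_mul_cancel₀ _ two_ne_zero, exp_log (by positivity)]
  have ht0 : 0 ≤ t :=
    div_nonneg (log_nonneg (by linarith [div_pos (mul_pos two_pos hε) hv])) zero_le_two
  have hind' : iIndepFun (fun i ω => X i ω - μ[X i]) μ :=
    (hind.comp (fun i (x : ℝ) => x - μ[X i]) fun i => measurable_id.sub_const _ :)
  have hchernoff := measureReal_sum_ge_le_exp (b := 2) (fun i => (hX i).sub_const _) hind'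
    two_pos (fun i => abs_sub_integral_le_two (hrange i))
    (fun i => by
      simp [integral_sub (.of_mem_Icc (-1) 1 (hX i).aemeasurable (.of_forall (hrange i)))
        (integrable_const _)])
    (fun i => (variance_sub_const (hX i).aestronglyMeasurable _).trans_le (hvar i)) ht0 (n * ε)
  have hn : (0 : ℝ) < n := by exact_mod_cast Fintype.card_pos
  calc μ.real {ω | n * ε ≤ ∑ i, (X i ω - μ[X i])}
      ≤ exp (n * (-t * ε + v * (exp (t * 2) - 1 - t * 2) / 2 ^ 2)) := by
        convert hchernoff using 2; ring
    _ < exp (n * (log 4 + ε / 2 * log v)) := by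
        exact exp_lt_exp.mpr (mul_lt_mul_of_pos_left (bennett_exponent_lt hv hε ht) hn)
    _ = 4 ^ n * v ^ (ε * n / 2) := by
        rw [mul_add, exp_add, exp_nat_mul, exp_log four_pos, rpow_def_of_pos hv]
        ring_nf

end ProbabilityTheory

theorem stmt4_general {Ω : Type*} [MeasurableSpace Ω] (μ : Measure Ω) [IsProbabilityMeasure μ]
    (m : ℕ) (hm : 0 < m) (X : Fin m → Ω → ℝ)
    (hmeas : ∀ i, Measurable (X i))
    (hindep : iIndepFun X μ)
    (hrange : ∀ i ω, X i ω ∈ Set.Icc (-1 : ℝ) 1)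
    (v : ℝ) (hv : 0 < v) (hvar : ∀ i, variance (X i) μ ≤ v)
    (ε : ℝ) (hε0 : 0 < ε) :
    (μ {ω | ε ≤ |(1 / m : ℝ) * ∑ i, X i ω - μ[fun ω => (1 / m : ℝ) * ∑ i, X i ω]|}).toReal
      < 2 * 4 ^ m * v ^ (ε * m / 2) := by
  have : Nonempty (Fin m) := ⟨⟨0, hm⟩⟩
  have hint i : Integrable (X i) μ :=
    .of_mem_Icc (-1) 1 (hmeas i).aemeasurable (.of_forall (hrange i))
  have hcenter ω : (1 / m : ℝ) * ∑ i, X i ω - μ[fun ω => (1 / m : ℝ) * ∑ i, X i ω]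
      = (1 / m : ℝ) * ∑ i, (X i ω - μ[X i]) := by
    rw [integral_const_mul, integral_finsetSum _ fun i _ => hint i, Finset.sum_sub_distrib,
      mul_sub]
  have hsplit : {ω | ε ≤ |(1 / m : ℝ) * ∑ i, X i ω - μ[fun ω => (1 / m : ℝ) * ∑ i, X i ω]|}
      ⊆ {ω | (m : ℝ) * ε ≤ ∑ i, (X i ω - μ[X i])}
        ∪ {ω | (m : ℝ) * ε ≤ ∑ i, ((-X i) ω - μ[-X i])} := by
    intro ω hω
    have hm' : (0 : ℝ) < m := by exact_mod_cast hm
    replace hω : ε ≤ |(1 / m : ℝ) * ∑ i, (X i ω - μ[X i])| := hcenter ω ▸ hω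
    rw [one_div_mul_eq_div, le_abs, le_div_iff₀' hm', ← neg_div, le_div_iff₀' hm'] at hω
    refine hω.imp id fun h => ?_
    simpa [integral_neg, Finset.sum_neg_distrib, neg_add_eq_sub] using h
  have hupper := measureReal_sum_sub_integral_ge_lt hmeas hindep hrange hv hvar hε0
  have hlower := measureReal_sum_sub_integral_ge_lt (X := fun i => -X i) (fun i => (hmeas i).neg)
    (hindep.comp (fun _ x => -x) fun _ => measurable_neg) (fun i ω => by
      show -X i ω ∈ Set.Icc (-1) 1
      constructor <;> linarith [(hrange i ω).1, (hrange i ω).2]) hv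
    (fun i => variance_neg.trans_le (hvar i)) hε0
  simp only [Fintype.card_fin] at hupper hlower
  calc (μ _).toReal ≤ _ := (measureReal_mono hsplit).trans (measureReal_union_le _ _)
    _ < _ := add_lt_add hupper hlower
    _ = 2 * 4 ^ m * v ^ (ε * m / 2) := by ring

theorem stmt4 {Ω : Type*} [MeasurableSpace Ω] (μ : Measure Ω) [IsProbabilityMeasure μ]
    (m : ℕ) (hm : 0 < m) (X : Fin m → Ω → ℝ)
    (hmeas : ∀ i, Measurable (X i))
    (hindep : iIndepFun X μ)
    (hrange : ∀ i ω, X i ω ∈ Set.Icc (-1 : ℝ) 1)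
    (v : ℝ) (hv : 0 < v) (hvar : ∀ i, variance (X i) μ ≤ v)
    (ε : ℝ) (hε0 : 0 < ε) (hε2 : ε < 2) :
    (μ {ω | ε ≤ |(1 / m : ℝ) * ∑ i, X i ω - μ[fun ω => (1 / m : ℝ) * ∑ i, X i ω]|}).toReal
      < 2 * 4 ^ m * v ^ (ε * m / 2) :=
  stmt4_general μ m hm X hmeas hindep hrange v hv hvar ε hε0
end

section
/- Let v > 0 and ε ∈ (0,2). Then (1 + 2ε/v)^{(v+2ε)/(v+4)} · (1 − ε/2)^{(1−ε/2)·4/(v+4)} > (1/4) · v^{−ε/2}. -/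
open Real

lemma aux_xlogx (x : ℝ) (hx : 0 < x) (hx1 : x ≤ 1) : -1 ≤ x * Real.log x := by
  have h := Real.log_le_sub_one_of_pos (x := x⁻¹) (by positivity)
  rw [Real.log_inv] at h
  have : x - 1 ≤ x * Real.log x := by
    have := mul_le_mul_of_nonneg_left h hx.le
    have hxne : x ≠ 0 := hx.ne'
    field_simp at this ⊢
    nlinarith
  linarith

lemma aux_rpow_exp (x y : ℝ) (hx : 0 < x) (h : -1 ≤ x * Real.log x)
    (hy : y = x) : Real.exp (-1) ≤ x ^ y := by
  rw [Real.rpow_def_of_pos hx, hy]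
  exact Real.exp_le_exp.mpr (by nlinarith [h])

theorem stmt5 (v ε : ℝ) (hv : 0 < v) (hε0 : 0 < ε) (hε2 : ε < 2) :
    (1 + 2 * ε / v) ^ ((v + 2 * ε) / (v + 4)) *
      (1 - ε / 2) ^ ((1 - ε / 2) * 4 / (v + 4)) >
      (1 / 4 : ℝ) * v ^ (-(ε / 2)) := by
  have hv4 : (0:ℝ) < v + 4 := by linarith
  have hb1 : (1:ℝ) ≤ 1 + 2 * ε / v := by
    have : 0 < 2 * ε / v := by positivity
    linarith
  have hb2 : (0:ℝ) < 1 - ε / 2 := by linarith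
  have hb2' : 1 - ε / 2 ≤ 1 := by linarith
  have hvpow : (0:ℝ) < v ^ (-(ε/2)) := Real.rpow_pos_of_pos hv _
  -- exponent bound
  have hp1 : ε / 2 ≤ (v + 2 * ε) / (v + 4) := by
    rw [div_le_div_iff₀ (by norm_num) hv4]
    nlinarith
  have hA1 : (1 + 2 * ε / v) ^ (ε/2) ≤ (1 + 2 * ε / v) ^ ((v + 2 * ε) / (v + 4)) :=
    Real.rpow_le_rpow_of_exponent_le hb1 hp1
  -- bound A below
  have hA2 : Real.exp (-(1/4)) * v ^ (-(ε/2)) ≤ (1 + 2 * ε / v) ^ (ε/2) := by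
    have hbase : 1 + 2 * ε / v = (v + 2 * ε) / v := by field_simp
    rw [hbase]
    rcases le_or_gt 1 (v + 2 * ε) with hc | hc
    · -- (v+2ε)/v ≥ 1/v
      have h1 : (1/v : ℝ) ^ (ε/2) ≤ ((v + 2*ε)/v) ^ (ε/2) := by
        apply Real.rpow_le_rpow (by positivity) _ (by positivity)
        gcongr
      have h2 : (1/v : ℝ) ^ (ε/2) = v ^ (-(ε/2)) := by
        rw [Real.rpow_neg hv.le, one_div, ← Real.inv_rpow hv.le]
      have h3 : Real.exp (-(1/4)) ≤ 1 := Real.exp_le_one_iff.mpr (by norm_num)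
      calc Real.exp (-(1/4)) * v ^ (-(ε/2)) ≤ 1 * v ^ (-(ε/2)) := by
            exact mul_le_mul_of_nonneg_right h3 hvpow.le
        _ = (1/v : ℝ) ^ (ε/2) := by rw [one_mul, h2]
        _ ≤ _ := h1
    · -- (v+2ε)/v ≥ 2ε/v, and (2ε)^(ε/2) ≥ exp(-1/4)
      have hε1 : 2 * ε < 1 := by linarith
      have h1 : ((2*ε)/v : ℝ) ^ (ε/2) ≤ ((v + 2*ε)/v) ^ (ε/2) := by
        apply Real.rpow_le_rpow (by positivity) _ (by positivity)
        gcongr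
        linarith
      have h2 : ((2*ε)/v : ℝ) ^ (ε/2) = (2*ε) ^ (ε/2) * v ^ (-(ε/2)) := by
        rw [Real.div_rpow (by positivity) hv.le, Real.rpow_neg hv.le, div_eq_mul_inv]
      have h3 : Real.exp (-(1/4)) ≤ (2*ε) ^ (ε/2) := by
        have hlog := aux_xlogx (2*ε) (by positivity) hε1.le
        rw [Real.rpow_def_of_pos (by positivity : (0:ℝ) < 2*ε)]
        apply Real.exp_le_exp.mpr
        nlinarith
      refine le_trans ?_ h1
      rw [h2]
      exact mul_le_mul_of_nonneg_right h3 hvpow.le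
  -- bound B below
  have hB : Real.exp (-1) ≤ (1 - ε / 2) ^ ((1 - ε / 2) * 4 / (v + 4)) := by
    have hp2 : (1 - ε / 2) * 4 / (v + 4) ≤ 1 - ε / 2 := by
      rw [div_le_iff₀ hv4]
      nlinarith
    have h1 : (1 - ε/2) ^ (1 - ε/2) ≤ (1 - ε / 2) ^ ((1 - ε / 2) * 4 / (v + 4)) :=
      Real.rpow_le_rpow_of_exponent_ge hb2 hb2' hp2
    have h2 := aux_rpow_exp (1 - ε/2) (1 - ε/2) hb2 (aux_xlogx _ hb2 hb2') rfl
    linarith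
  -- combine
  have hApos : (0:ℝ) < Real.exp (-(1/4)) * v ^ (-(ε/2)) := by positivity
  have hprod : Real.exp (-(1/4)) * v ^ (-(ε/2)) * Real.exp (-1) ≤
      (1 + 2 * ε / v) ^ ((v + 2 * ε) / (v + 4)) *
      (1 - ε / 2) ^ ((1 - ε / 2) * 4 / (v + 4)) := by
    apply mul_le_mul (le_trans hA2 hA1) hB (Real.exp_pos _).le
    positivity
  have hkey : (1/4 : ℝ) * v ^ (-(ε/2)) < Real.exp (-(1/4)) * v ^ (-(ε/2)) * Real.exp (-1) := by
    have heq : Real.exp (-(1/4)) * v ^ (-(ε/2)) * Real.exp (-1)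
        = Real.exp (-(5/4)) * v ^ (-(ε/2)) := by
      rw [mul_comm _ (Real.exp (-1)), ← mul_assoc, ← Real.exp_add]
      norm_num
    rw [heq]
    apply mul_lt_mul_of_pos_right _ hvpow
    -- 1/4 < exp(-(5/4))  ⇔  exp(5/4) < 4  ⇔ 5/4 < log 4
    have h4 : Real.exp (5/4) < 4 := by
      rw [← Real.lt_log_iff_exp_lt (by norm_num : (0:ℝ) < 4)]
      have : Real.log 4 = 2 * Real.log 2 := by
        rw [show (4:ℝ) = 2^2 by norm_num, Real.log_pow]; push_cast; ring
      rw [this]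
      nlinarith [Real.log_two_gt_d9]
    have : (1/4 : ℝ) < (Real.exp (5/4))⁻¹ := by
      rw [lt_inv_comm₀ (by norm_num) (Real.exp_pos _)]
      simpa using h4
    rwa [← Real.exp_neg] at this
  calc (1/4 : ℝ) * v ^ (-(ε/2)) < _ := hkey
    _ ≤ _ := hprod
end

section
/- Let X be a real random variable with |X| ≤ 1, defined on a probability space (Ω, P), and let A ⊆ Ω have P(A) = γ > 1/2. Then the variance of X with respect to the conditional measure P(·|A) is at most 4 times the variance of X with respect to P. -/
/-!
Centring at the unconditional mean `m = 𝔼[X]` instead of the conditional one can only increase the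
conditional second moment, and `P(· | A) ≤ γ⁻¹ P`, so
`Var(X | A) ≤ 𝔼[(X - m)² | A] ≤ γ⁻¹ 𝔼[(X - m)²] = γ⁻¹ Var(X) ≤ 2 Var(X)`.
-/

open MeasureTheory ProbabilityTheory

namespace ProbabilityTheory

variable {Ω : Type*} [MeasurableSpace Ω] {X : Ω → ℝ}

lemma variance_le_integral_sub_sq {μ : Measure Ω} [IsProbabilityMeasure μ]
    (hX : AEStronglyMeasurable X μ) (c : ℝ) :
    Var[X; μ] ≤ ∫ ω, (X ω - c) ^ 2 ∂μ := by
  rw [← variance_sub_const hX c]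
  exact variance_le_expectation_sq (by fun_prop)

lemma variance_le_mul_of_le_smul {μ ν : Measure Ω} [IsFiniteMeasure μ] [IsProbabilityMeasure ν]
    {c : ENNReal} (hc : c ≠ ⊤) (hνμ : ν ≤ c • μ) (hX : MemLp X 2 μ) :
    Var[X; ν] ≤ c.toReal * Var[X; μ] := by
  have hsq : Integrable (fun ω ↦ (X ω - μ[X]) ^ 2) μ := (hX.sub (memLp_const μ[X])).integrable_sq
  calc Var[X; ν] ≤ ∫ ω, (X ω - μ[X]) ^ 2 ∂ν :=
        variance_le_integral_sub_sq (hX.of_measure_le_smul hc hνμ).aestronglyMeasurable _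
    _ ≤ ∫ ω, (X ω - μ[X]) ^ 2 ∂(c • μ) :=
        integral_mono_measure hνμ (.of_forall fun _ ↦ sq_nonneg _) (hsq.smul_measure hc)
    _ = c.toReal * Var[X; μ] := by
        rw [integral_smul_measure, smul_eq_mul, variance_eq_integral hX.aemeasurable]

lemma cond_le_inv_smul (μ : Measure Ω) (s : Set Ω) : μ[|s] ≤ (μ s)⁻¹ • μ := by
  rw [cond]
  gcongr
  exact Measure.restrict_le_self

end ProbabilityTheory

theorem stmt8_general {Ω : Type*} [MeasurableSpace Ω] (μ : Measure Ω) [IsProbabilityMeasure μ]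
    (A : Set Ω) (γ : ℝ) (hγ : (μ A).toReal = γ) (hγhalf : 1 / 2 < γ)
    (X : Ω → ℝ) (hX : Measurable X) (hbd : ∀ ω, |X ω| ≤ 1) :
    variance X (μ[|A]) ≤ 4 * variance X μ := by
  have hA : μ A ≠ 0 := fun h ↦ by simp [h] at hγ; linarith
  have : IsProbabilityMeasure μ[|A] := cond_isProbabilityMeasure hA
  have hX2 : MemLp X 2 μ := .of_bound hX.aestronglyMeasurable 1 (.of_forall hbd)
  calc variance X (μ[|A]) ≤ ((μ A)⁻¹).toReal * variance X μ :=
        variance_le_mul_of_le_smul (ENNReal.inv_ne_top.2 hA) (cond_le_inv_smul μ A) hX2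
    _ ≤ 4 * variance X μ := by
        gcongr
        · exact variance_nonneg X μ
        · rw [ENNReal.toReal_inv, hγ, inv_le_comm₀ (by linarith) (by norm_num)]
          linarith

theorem stmt8 {Ω : Type*} [MeasurableSpace Ω] (μ : Measure Ω) [IsProbabilityMeasure μ]
    (A : Set Ω) (hA : MeasurableSet A) (γ : ℝ) (hγ : (μ A).toReal = γ) (hγhalf : 1 / 2 < γ)
    (X : Ω → ℝ) (hX : Measurable X) (hbd : ∀ ω, |X ω| ≤ 1) :
    variance X (μ[|A]) ≤ 4 * variance X μ :=
  stmt8_general μ A γ hγ hγhalf X hX hbd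
end
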